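/- Let X be a finite set with |X| = n ≥ 2, K a natural number with 1 ≤ K < n, α : X → ℝ with α(i) < 0 for every i, β a symmetric function assigning to each unordered pair {i,j} of distinct elements of X a value β(i,j) > 0, and B a real number. Define the QUBO objective of a subset S ⊆ X by O(S) = Σ_{i ∈ S} (α(i) − B·K + B/2) + Σ_{{i,j} ⊆ S, i ≠ j} (β(i,j) + B). If B > max( 2·max_{i ∈ X} |α(i)| , 2·K·max_{i ≠ j} β(i,j) ), then every subset S ⊆ X minimizing O over all subsets of X satisfies |S| = K. -/

import Mathlib

/-- The QUBO objective of a selection `S`: each selected node `i` contributes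
`α i − B·K + B/2` and each unordered pair `{i,j} ⊆ S` of distinct selected nodes
contributes `β i j + B`. -/
noncomputable def quboObj {ι : Type*} [LinearOrder ι] (α : ι → ℝ) (β : ι → ι → ℝ)
    (B K : ℝ) (S : Finset ι) : ℝ :=
  (∑ i ∈ S, (α i - B * K + B / 2)) +
    ∑ p ∈ S.offDiag.filter (fun p => p.1 < p.2), (β p.1 p.2 + B)

lemma sum_lt_eq_sum_gt {ι : Type*} [LinearOrder ι] (g : ι → ι → ℝ)
    (hg : ∀ a b, g a b = g b a) (s : Finset ι) :
    ∑ p ∈ s.offDiag.filter (fun p => p.1 < p.2), g p.1 p.2 =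
    ∑ p ∈ s.offDiag.filter (fun p => p.2 < p.1), g p.1 p.2 := by
  apply Finset.sum_nbij' (fun p => Prod.swap p) (fun p => Prod.swap p) <;>
    simp +contextual [Finset.mem_offDiag, hg _, eq_comm]

lemma pair_split {ι : Type*} [LinearOrder ι] (g : ι → ι → ℝ)
    (hg : ∀ a b, g a b = g b a) (s : Finset ι) :
    ∑ p ∈ s.offDiag, g p.1 p.2 =
    2 * ∑ p ∈ s.offDiag.filter (fun p => p.1 < p.2), g p.1 p.2 := by
  rw [← Finset.sum_filter_add_sum_filter_not s.offDiag (fun p => p.1 < p.2)]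
  have : s.offDiag.filter (fun p => ¬ p.1 < p.2) =
      s.offDiag.filter (fun p => p.2 < p.1) := by
    apply Finset.filter_congr
    intro p hp
    simp only [Finset.mem_offDiag] at hp
    simp only [not_lt, eq_iff_iff]
    exact ⟨fun h => lt_of_le_of_ne h (Ne.symm hp.2.2), le_of_lt⟩
  rw [this, ← sum_lt_eq_sum_gt g hg]
  ring

lemma pairSum_insert {ι : Type*} [LinearOrder ι] (g : ι → ι → ℝ)
    (hg : ∀ a b, g a b = g b a) (s : Finset ι) (i : ι) (hi : i ∉ s) :
    ∑ p ∈ (insert i s).offDiag.filter (fun p => p.1 < p.2), g p.1 p.2 =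
    (∑ p ∈ s.offDiag.filter (fun p => p.1 < p.2), g p.1 p.2) + ∑ j ∈ s, g i j := by
  have h2 : (2:ℝ) ≠ 0 := by norm_num
  apply mul_left_cancel₀ h2
  rw [← pair_split g hg]
  have key : (insert i s).offDiag = s.offDiag ∪ {i} ×ˢ s ∪ s ×ˢ {i} := by
    ext ⟨a, b⟩
    simp only [Finset.mem_offDiag, Finset.mem_insert, Finset.mem_union,
      Finset.mem_product, Finset.mem_singleton]
    constructor
    · rintro ⟨ha | ha, hb | hb, hab⟩
      · exact absurd (ha.trans hb.symm) hab
      · subst ha; tauto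
      · subst hb; tauto
      · tauto
    · rintro ((⟨ha, hb, hab⟩ | ⟨ha, hb⟩) | ⟨ha, hb⟩)
      · exact ⟨Or.inr ha, Or.inr hb, hab⟩
      · subst ha; exact ⟨Or.inl rfl, Or.inr hb, fun h => hi (h ▸ hb)⟩
      · subst hb; exact ⟨Or.inr ha, Or.inl rfl, fun h => hi (h ▸ ha)⟩
  rw [key]
  rw [Finset.sum_union, Finset.sum_union]
  · rw [pair_split g hg s]
    have e1 : ∑ p ∈ ({i} ×ˢ s), g p.1 p.2 = ∑ j ∈ s, g i j := by
      rw [Finset.sum_product]; simp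
    have e2 : ∑ p ∈ (s ×ˢ {i}), g p.1 p.2 = ∑ j ∈ s, g i j := by
      rw [Finset.sum_product]; simp [hg _ i]
    rw [e1, e2]; ring
  · simp only [Finset.disjoint_left]
    rintro ⟨a,b⟩ hab hb
    simp only [Finset.mem_offDiag] at hab
    simp only [Finset.mem_product, Finset.mem_singleton] at hb
    exact hi (hb.1 ▸ hab.1)
  · simp only [Finset.disjoint_left]
    rintro ⟨a,b⟩ hab hb
    simp only [Finset.mem_union, Finset.mem_offDiag, Finset.mem_product,
      Finset.mem_singleton] at hab hb
    rcases hab with ⟨ha, hbs, _⟩ | ⟨ha, _⟩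
    · exact hi (hb.2 ▸ hbs)
    · exact hi (ha ▸ hb.1)

lemma quboObj_insert {ι : Type*} [LinearOrder ι] (α : ι → ℝ) (β : ι → ι → ℝ)
    (hβsymm : ∀ i j, β i j = β j i) (B K : ℝ) (S : Finset ι) (i : ι) (hi : i ∉ S) :
    quboObj α β B K (insert i S) =
      quboObj α β B K S + (α i - B * K + B / 2) + ∑ j ∈ S, (β i j + B) := by
  unfold quboObj
  rw [Finset.sum_insert hi,
    pairSum_insert (fun a b => β a b + B) (fun a b => by show β a b + B = β b a + B; rw [hβsymm]) S i hi]
  ring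

/-- If `B > max(2·max_{i ∈ X} |α(i)|, 2·K·max_{i ≠ j} β(i,j))`, then every subset
`S ⊆ X` minimizing the QUBO objective over all subsets of `X` selects exactly `K`
nodes. -/
theorem qubo_minimizer_has_card_K {ι : Type*} [LinearOrder ι] (X : Finset ι)
    (hX : X.Nonempty) (hXoff : X.offDiag.Nonempty)
    (n : ℕ) (hXcard : X.card = n) (hn : 2 ≤ n)
    (K : ℕ) (hK : 1 ≤ K) (hKn : K < n)
    (α : ι → ℝ) (hα : ∀ i ∈ X, α i < 0)
    (β : ι → ι → ℝ) (hβsymm : ∀ i j, β i j = β j i)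
    (hβpos : ∀ i ∈ X, ∀ j ∈ X, i ≠ j → 0 < β i j)
    (B : ℝ)
    (hB : B > max (2 * X.sup' hX (fun i => |α i|))
                  (2 * (K : ℝ) * X.offDiag.sup' hXoff (fun p => β p.1 p.2))) :
    ∀ S ⊆ X, (∀ T ⊆ X, quboObj α β B (K : ℝ) S ≤ quboObj α β B (K : ℝ) T) →
      S.card = K := by
  intro S hSX hmin
  set A := X.sup' hX (fun i => |α i|) with hAdef
  set M := X.offDiag.sup' hXoff (fun p => β p.1 p.2) with hMdef
  have hA : ∀ i ∈ X, |α i| ≤ A := fun i hi => Finset.le_sup' (fun i => |α i|) hi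
  have hM : ∀ i ∈ X, ∀ j ∈ X, i ≠ j → β i j ≤ M := by
    intro i hi j hj hij
    exact Finset.le_sup' (f := fun p : ι × ι => β p.1 p.2)
      (s := X.offDiag) (b := (i, j)) (Finset.mem_offDiag.mpr ⟨hi, hj, hij⟩)
  have hA0 : 0 ≤ A := by
    obtain ⟨i, hi⟩ := hX
    exact (abs_nonneg _).trans (hA i hi)
  have hM0 : 0 < M := by
    obtain ⟨p, hp⟩ := hXoff
    have hp' := Finset.mem_offDiag.mp hp
    exact lt_of_lt_of_le (hβpos _ hp'.1 _ hp'.2.1 hp'.2.2)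
      (hM _ hp'.1 _ hp'.2.1 hp'.2.2)
  have hB1 : 2 * A < B := lt_of_le_of_lt (le_max_left _ _) hB
  have hB2 : 2 * (K : ℝ) * M < B := lt_of_le_of_lt (le_max_right _ _) hB
  have hK1 : (1 : ℝ) ≤ (K : ℝ) := by exact_mod_cast hK
  have hBpos : 0 < B := lt_of_le_of_lt (by nlinarith) hB2
  by_contra hne
  rcases lt_or_gt_of_ne hne with hlt | hgt
  · -- S.card < K : add an element
    have hne' : S ≠ X := by
      intro h; rw [h, hXcard] at hlt; omega
    obtain ⟨i, hiX, hiS⟩ := Finset.exists_of_ssubset (hSX.ssubset_of_ne hne')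
    have hTX : insert i S ⊆ X := Finset.insert_subset hiX hSX
    have hle := hmin _ hTX
    rw [quboObj_insert α β hβsymm B (K : ℝ) S i hiS] at hle
    have hsum : ∑ j ∈ S, (β i j + B) = (∑ j ∈ S, β i j) + S.card * B := by
      rw [Finset.sum_add_distrib, Finset.sum_const, nsmul_eq_mul]
    have hβle : ∑ j ∈ S, β i j ≤ (S.card : ℝ) * M := by
      calc ∑ j ∈ S, β i j ≤ ∑ _j ∈ S, M := by
            apply Finset.sum_le_sum
            intro j hj
            exact hM i hiX j (hSX hj) (fun h => hiS (h ▸ hj))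
        _ = (S.card : ℝ) * M := by rw [Finset.sum_const, nsmul_eq_mul]
    have hm : (S.card : ℝ) ≤ (K : ℝ) - 1 := by
      have : S.card + 1 ≤ K := hlt
      have := (Nat.cast_le (α := ℝ)).mpr this
      push_cast at this; linarith
    have hαi := hα i hiX
    rw [hsum] at hle
    nlinarith [hle, hβle, hm, hαi, hBpos, hB2, hM0.le]
  · -- K < S.card : remove an element
    have hSne : S.Nonempty := Finset.card_pos.mp (by omega)
    obtain ⟨i, hiS⟩ := hSne
    have hiT : i ∉ S.erase i := Finset.notMem_erase i S
    have hins : insert i (S.erase i) = S := Finset.insert_erase hiS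
    have hTX : S.erase i ⊆ X := (Finset.erase_subset i S).trans hSX
    have hle := hmin _ hTX
    have heq := quboObj_insert α β hβsymm B (K : ℝ) (S.erase i) i hiT
    rw [hins] at heq
    rw [heq] at hle
    have hcard : (S.erase i).card = S.card - 1 := Finset.card_erase_of_mem hiS
    have hsum : ∑ j ∈ S.erase i, (β i j + B) =
        (∑ j ∈ S.erase i, β i j) + (S.erase i).card * B := by
      rw [Finset.sum_add_distrib, Finset.sum_const, nsmul_eq_mul]
    have hβge : 0 ≤ ∑ j ∈ S.erase i, β i j := by
      apply Finset.sum_nonneg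
      intro j hj
      exact (hβpos i (hSX hiS) j (hTX hj) (fun h => hiT (h ▸ hj))).le
    have hm : (K : ℝ) ≤ ((S.erase i).card : ℝ) := by
      have : K ≤ (S.erase i).card := by omega
      exact_mod_cast this
    have hαi : -A ≤ α i := by
      have := hA i (hSX hiS)
      have := abs_le.mp this
      linarith [this.1]
    rw [hsum] at hle
    nlinarith [hle, hβge, hm, hαi, hBpos, hB1, hA0]
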